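/- arXiv:1105.2341 — 3 statements merged into one kernel-verified Lean document; each statement's English description precedes it below -/
import Mathlib

section
/- For nonnegative integers b, b', and a, the alternating convolution ∑_{i+j = c, i,j ≥ 0} (-1)^j * binom(i, a) * binom(j, a) equals 0 if c is odd, and equals (-1)^a * binom(d, a) if c = 2d is even. -/
/-!
With `F_a = ∑ C(n, a) Xⁿ = Xᵃ / (1 - X)ᵃ⁺¹`, the sum is the `c`-th coefficient of
`F_a(X) · F_a(-X) = (-1)ᵃ X²ᵃ / (1 - X²)ᵃ⁺¹ = (-1)ᵃ F_a(X²)`.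
-/

open Finset

namespace PowerSeries

variable (R : Type*) [CommRing R]

noncomputable def chooseSeries (a : ℕ) : R⟦X⟧ :=
  mk fun n => (n.choose a : R)

theorem chooseSeries_eq_X_pow_mul (a : ℕ) :
    chooseSeries R a = X ^ a * mk fun n => ((a + n).choose a : R) := by
  ext n
  rw [coeff_X_pow_mul', chooseSeries, coeff_mk]
  split_ifs with h
  · rw [coeff_mk, Nat.add_sub_cancel' h]
  · rw [Nat.choose_eq_zero_of_lt (not_le.mp h), Nat.cast_zero]

theorem one_sub_X_pow_mul_chooseSeries (a : ℕ) :
    (1 - X) ^ (a + 1) * chooseSeries R a = X ^ a := by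
  rw [chooseSeries_eq_X_pow_mul, mul_left_comm, mul_comm _ (mk _),
    mk_add_choose_mul_one_sub_pow_eq_one, mul_one]

theorem one_add_X_pow_mul_rescale_chooseSeries (a : ℕ) :
    (1 + X) ^ (a + 1) * rescale (-1) (chooseSeries R a) = (-X) ^ a := by
  simpa [rescale_neg_one_X, sub_neg_eq_add] using
    congrArg (rescale (-1 : R)) (one_sub_X_pow_mul_chooseSeries R a)

theorem one_sub_X_sq_pow_mul_expand_chooseSeries (a : ℕ) :
    (1 - X ^ 2) ^ (a + 1) * expand 2 two_ne_zero (chooseSeries R a) = X ^ (2 * a) := by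
  simpa [pow_mul] using
    congrArg (expand 2 two_ne_zero) (one_sub_X_pow_mul_chooseSeries R a)

theorem chooseSeries_mul_rescale_chooseSeries (a : ℕ) :
    chooseSeries R a * rescale (-1) (chooseSeries R a) =
      C ((-1) ^ a) * expand 2 two_ne_zero (chooseSeries R a) := by
  have hunit : IsUnit ((1 - X ^ 2 : R⟦X⟧) ^ (a + 1)) :=
    (isUnit_iff_constantCoeff.mpr (by simp)).pow _
  apply hunit.mul_left_cancel
  calc (1 - X ^ 2) ^ (a + 1) * (chooseSeries R a * rescale (-1) (chooseSeries R a))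
    _ = ((1 - X) ^ (a + 1) * chooseSeries R a) *
          ((1 + X) ^ (a + 1) * rescale (-1) (chooseSeries R a)) := by
      rw [show (1 - X ^ 2 : R⟦X⟧) = (1 - X) * (1 + X) by ring, mul_pow]
      ring
    _ = C ((-1) ^ a) * X ^ (2 * a) := by
      rw [one_sub_X_pow_mul_chooseSeries, one_add_X_pow_mul_rescale_chooseSeries]
      simp only [map_pow, map_neg, map_one]
      ring
    _ = (1 - X ^ 2) ^ (a + 1) * (C ((-1) ^ a) * expand 2 two_ne_zero (chooseSeries R a)) := by
      rw [← one_sub_X_sq_pow_mul_expand_chooseSeries]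
      ring

end PowerSeries

open PowerSeries in
theorem sum_antidiagonal_neg_one_pow_mul_choose_mul_choose (R : Type*) [CommRing R] (c a : ℕ) :
    ∑ p ∈ antidiagonal c, (-1 : R) ^ p.2 * (p.1.choose a : R) * (p.2.choose a : R) =
      if 2 ∣ c then (-1) ^ a * ((c / 2).choose a : R) else 0 := by
  have h := congrArg (coeff c) (chooseSeries_mul_rescale_chooseSeries R a)
  rw [coeff_mul, coeff_C_mul, coeff_expand, mul_ite, mul_zero] at h
  simp only [coeff_rescale, chooseSeries, coeff_mk] at h
  rw [← h]
  exact sum_congr rfl fun p _ => by ring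

/-- The alternating convolution `∑_{i+j=c} (-1)^j C(i,a) C(j,a)` is `0` for odd `c`
and `(-1)^a C(d,a)` for `c = 2d`. -/
theorem stmt1 (c a : ℕ) :
    (∑ p ∈ Finset.HasAntidiagonal.antidiagonal c,
        (-1 : ℤ) ^ p.2 * (p.1.choose a : ℤ) * (p.2.choose a : ℤ))
      = if Odd c then 0 else (-1) ^ a * ((c / 2).choose a : ℤ) := by
  simp only [sum_antidiagonal_neg_one_pow_mul_choose_mul_choose, ← even_iff_two_dvd,
    ← Nat.not_odd_iff_even, ite_not]
end

section
/- In the group algebra ℂ[S_m] of the symmetric group, the element H = (1/m!) ∏_{1≤i<j≤m} (1 + s_{ij}/(j-i)), where s_{ij} is the transposition (i j) and the product is taken in lexicographic order on pairs (i,j), equals the full symmetrizer (1/m!) ∑_{σ ∈ S_m} σ. -/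
/-!
Write `E_a` for the sum of the permutations fixing `0, …, a - 1` and `D_{a,t}` for the part of
`E_a` where `σ a ≥ t`. Left multiplication by `s_{at}` maps `E_{a+1}` onto the part of `E_a` with
`σ a = t`, and fixes `D_{a,t+1}`. Hence, by downward induction on `t > a`,
`∏_{j ≥ t} (1 + s_{aj}/(j - a)) · E_{a+1} = E_{a+1} + D_{a,t}/(t - a)`, the coefficients
telescoping through `1/(t+1-a) · (1 + 1/(t-a)) = 1/(t-a)`. At `t = a + 1` the right side is `E_a`,
so the product of the rows `a, a+1, …` is `E_a`, and the whole product is `E_0 = ∑ σ`.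
-/

open MonoidAlgebra

theorem Finset.sum_filter_eq_add_of_iff {ι M : Type*} [Fintype ι] [AddCommMonoid M]
    (f : ι → M) {p q r : ι → Prop} [DecidablePred p] [DecidablePred q] [DecidablePred r]
    (h : ∀ x, p x ↔ q x ∨ r x) (hqr : ∀ x, q x → ¬ r x) :
    ∑ x with p x, f x = ∑ x with q x, f x + ∑ x with r x, f x := by
  classical
  rw [← Finset.sum_union (Finset.disjoint_filter.2 fun x _ => hqr x), ← Finset.filter_or]
  exact Finset.sum_congr (Finset.filter_congr fun x _ => h x) fun _ _ => rfl

theorem MonoidAlgebra.of_mul_sum_filter {k G : Type*} [Semiring k] [Group G] [Fintype G]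
    (g : G) (p : G → Prop) [DecidablePred p] :
    of k G g * ∑ x with p x, of k G x = ∑ x with p (g⁻¹ * x), of k G x := by
  rw [Finset.mul_sum, Finset.sum_filter, Finset.sum_filter]
  refine Fintype.sum_equiv (Equiv.mulLeft g) _ _ fun x => ?_
  simp [map_mul]

theorem List.finRange_drop_eq_cons {m t : ℕ} (ht : t < m) :
    (List.finRange m).drop t = ⟨t, ht⟩ :: (List.finRange m).drop (t + 1) := by
  rw [List.drop_eq_getElem_cons (by simpa)]
  simp

theorem List.finRange_filter_lt (m : ℕ) (a : Fin m) :
    (List.finRange m).filter (fun j => decide (a < j)) = (List.finRange m).drop (a + 1) := by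
  conv_lhs => rw [← List.take_append_drop (a + 1) (List.finRange m)]
  rw [List.filter_append, List.filter_eq_nil_iff.2, List.filter_eq_self.2, List.nil_append]
  · intro j hj
    obtain ⟨i, -, rfl⟩ := List.mem_drop_iff_getElem.1 hj
    simp only [List.getElem_finRange, decide_eq_true_eq, Fin.lt_def, Fin.val_cast]
    omega
  · intro j hj
    obtain ⟨i, hi, rfl⟩ := List.mem_take_iff_getElem.1 hj
    simp only [List.getElem_finRange, decide_eq_true_eq, Fin.lt_def, Fin.val_cast]
    omega

namespace Jucys

variable {k : Type*} {m : ℕ}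

def FixesBelow (a : ℕ) (σ : Equiv.Perm (Fin m)) : Prop :=
  ∀ i : Fin m, (i : ℕ) < a → σ i = i

instance (a : ℕ) : DecidablePred (FixesBelow (m := m) a) :=
  fun σ => inferInstanceAs (Decidable (∀ i : Fin m, (i : ℕ) < a → σ i = i))

theorem FixesBelow.le_apply {a : Fin m} {σ : Equiv.Perm (Fin m)} (hσ : FixesBelow a σ) :
    (a : ℕ) ≤ σ a := by
  by_contra! hlt
  exact hlt.ne (congrArg Fin.val (σ.injective (hσ _ hlt)))

theorem fixesBelow_succ_iff {a : Fin m} {σ : Equiv.Perm (Fin m)} :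
    FixesBelow (a + 1) σ ↔ FixesBelow a σ ∧ σ a = a := by
  refine ⟨fun h => ⟨fun i hi => h i (by omega), h a (by omega)⟩, fun ⟨h, ha⟩ i hi => ?_⟩
  rcases Nat.lt_succ_iff_lt_or_eq.1 hi with hi | hi
  · exact h i hi
  · rwa [Fin.ext hi]

theorem fixesBelow_swap_mul_iff {a : ℕ} {x y : Fin m} (hx : a ≤ x) (hy : a ≤ y)
    {σ : Equiv.Perm (Fin m)} : FixesBelow a (Equiv.swap x y * σ) ↔ FixesBelow a σ := by
  refine forall_congr' fun i => imp_congr_right fun hi => ?_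
  rw [Equiv.Perm.mul_apply, Equiv.swap_apply_eq_iff,
    Equiv.swap_apply_of_ne_of_ne (Fin.ne_of_val_ne (by omega)) (Fin.ne_of_val_ne (by omega))]

theorem fixesBelow_succ_swap_mul_iff {a t : Fin m} (h : a < t) {σ : Equiv.Perm (Fin m)} :
    FixesBelow (a + 1) (Equiv.swap a t * σ) ↔ FixesBelow a σ ∧ σ a = t := by
  rw [fixesBelow_succ_iff, fixesBelow_swap_mul_iff le_rfl (le_of_lt h), Equiv.Perm.mul_apply,
    Equiv.swap_apply_eq_iff, Equiv.swap_apply_left]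

section Semiring

variable (k) [Semiring k]

noncomputable def prefixFixSum (m a : ℕ) : MonoidAlgebra k (Equiv.Perm (Fin m)) :=
  ∑ σ with FixesBelow a σ, of k _ σ

noncomputable def tailSum (a : Fin m) (t : ℕ) : MonoidAlgebra k (Equiv.Perm (Fin m)) :=
  ∑ σ with FixesBelow a σ ∧ t ≤ σ a, of k _ σ

theorem prefixFixSum_zero : prefixFixSum k m 0 = ∑ σ : Equiv.Perm (Fin m), of k _ σ := by
  rw [prefixFixSum, Finset.filter_true_of_mem fun σ _ i hi => absurd hi (Nat.not_lt_zero _)]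

theorem prefixFixSum_self : prefixFixSum k m m = 1 := by
  have h : (Finset.univ.filter (FixesBelow (m := m) m)) = {1} := by
    ext σ
    simp [FixesBelow, Equiv.ext_iff]
  rw [prefixFixSum, h, Finset.sum_singleton, map_one]

theorem tailSum_self (a : Fin m) : tailSum k a m = 0 := by
  rw [tailSum, Finset.filter_false_of_mem fun σ _ h => not_le.2 (σ a).isLt h.2, Finset.sum_empty]

theorem prefixFixSum_eq_add (a : Fin m) :
    prefixFixSum k m a = prefixFixSum k m (a + 1) + tailSum k a (a + 1) := by
  refine Finset.sum_filter_eq_add_of_iff _ (fun σ => ?_) fun σ hσ hσ' => ?_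
  · rw [fixesBelow_succ_iff, Fin.ext_iff, ← and_or_left]
    exact (and_iff_left_of_imp fun hσ => by have := hσ.le_apply; omega).symm
  · rw [fixesBelow_succ_iff, Fin.ext_iff] at hσ
    omega

theorem tailSum_eq_add {a t : Fin m} (h : a < t) :
    tailSum k a t = of k _ (Equiv.swap a t) * prefixFixSum k m (a + 1) + tailSum k a (t + 1) := by
  rw [prefixFixSum, of_mul_sum_filter, Equiv.swap_inv]
  refine Finset.sum_filter_eq_add_of_iff _ (fun σ => ?_) fun σ hσ hσ' => ?_
  · rw [fixesBelow_succ_swap_mul_iff h, Fin.ext_iff, ← and_or_left]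
    exact and_congr_right fun _ => by omega
  · rw [fixesBelow_succ_swap_mul_iff h, Fin.ext_iff] at hσ
    omega

theorem swap_mul_tailSum {a t : Fin m} (h : a < t) :
    of k _ (Equiv.swap a t) * tailSum k a (t + 1) = tailSum k a (t + 1) := by
  rw [tailSum, of_mul_sum_filter, Equiv.swap_inv]
  refine Finset.sum_congr (Finset.filter_congr fun σ _ => ?_) fun _ _ => rfl
  rw [fixesBelow_swap_mul_iff le_rfl (le_of_lt h), Equiv.Perm.mul_apply, Equiv.swap_apply_def]
  split_ifs with h₁ h₂ <;> simp only [Fin.ext_iff, Fin.lt_def] at * <;> omega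

end Semiring

section Field

variable (k) [Field k] [CharZero k]

noncomputable def jucysFactor (i j : Fin m) : MonoidAlgebra k (Equiv.Perm (Fin m)) :=
  1 + (((j : ℕ) : k) - ((i : ℕ) : k))⁻¹ • of k _ (Equiv.swap i j)

theorem prod_drop_jucysFactor_mul (a : Fin m) {t : ℕ} (ht : a < t) (htm : t ≤ m) :
    (((List.finRange m).drop t).map (jucysFactor k a)).prod * prefixFixSum k m (a + 1)
      = prefixFixSum k m (a + 1) + ((t : k) - a)⁻¹ • tailSum k a t := by
  induction htm using Nat.decreasingInduction with
  | self => simp [List.drop_eq_nil_of_le, tailSum_self]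
  | of_succ t htm ih =>
    have hsplit : tailSum k a t = of k _ (Equiv.swap a ⟨t, htm⟩) * prefixFixSum k m (a + 1)
        + tailSum k a (t + 1) := tailSum_eq_add k (t := ⟨t, htm⟩) ht
    have hinv : of k _ (Equiv.swap a ⟨t, htm⟩) * tailSum k a (t + 1) = tailSum k a (t + 1) :=
      swap_mul_tailSum k (t := ⟨t, htm⟩) ht
    have hsub : ((t : k) - a) ≠ 0 := sub_ne_zero.2 (by exact_mod_cast ht.ne')
    have hsub' : ((t : k) + 1 - a) ≠ 0 :=
      sub_ne_zero.2 (by exact_mod_cast (ht.trans (Nat.lt_succ_self t)).ne')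
    have hcoeff :
        ((t : k) + 1 - a)⁻¹ + ((t : k) - a)⁻¹ * ((t : k) + 1 - a)⁻¹ = ((t : k) - a)⁻¹ := by
      field_simp
      ring
    rw [List.finRange_drop_eq_cons htm, List.map_cons, List.prod_cons, mul_assoc, ih (by omega),
      jucysFactor, add_mul, one_mul, mul_add, smul_mul_assoc, smul_mul_assoc, mul_smul_comm, hinv,
      hsplit]
    push_cast
    linear_combination (norm := module) hcoeff • tailSum k a (t + 1)

theorem prod_drop_flatMap_jucysFactor {a : ℕ} (ham : a ≤ m) :
    (((List.finRange m).drop a).flatMap fun i =>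
      ((List.finRange m).filter fun j => decide (i < j)).map (jucysFactor k i)).prod
      = prefixFixSum k m a := by
  induction ham using Nat.decreasingInduction with
  | self => simp [List.drop_eq_nil_of_le, prefixFixSum_self]
  | of_succ a ham ih =>
    rw [List.finRange_drop_eq_cons ham, List.flatMap_cons, List.prod_append, ih,
      List.finRange_filter_lt, prod_drop_jucysFactor_mul k ⟨a, ham⟩ (Nat.lt_succ_self a) ham]
    simpa using (prefixFixSum_eq_add k ⟨a, ham⟩).symm

end Field

end Jucys

/-- Jucys' multiplicative formula: in ℂ[S_m],
`(1/m!) ∏_{i<j, lex order} (1 + s_{ij}/(j-i)) = (1/m!) ∑_{σ∈S_m} σ`. -/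
theorem stmt2 (m : ℕ) :
    ((m.factorial : ℂ)⁻¹ •
      (((List.finRange m).flatMap fun (i : Fin m) =>
          ((List.finRange m).filter fun (j : Fin m) => decide (i < j)).map
            fun (j : Fin m) =>
            ((1 : MonoidAlgebra ℂ (Equiv.Perm (Fin m))) +
              (((j : ℕ) : ℂ) - ((i : ℕ) : ℂ))⁻¹ •
                MonoidAlgebra.of ℂ (Equiv.Perm (Fin m)) (Equiv.swap i j))).prod))
      = (m.factorial : ℂ)⁻¹ • ∑ σ : Equiv.Perm (Fin m),
          MonoidAlgebra.of ℂ (Equiv.Perm (Fin m)) σ := by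
  have h := Jucys.prod_drop_flatMap_jucysFactor ℂ (Nat.zero_le m)
  rw [List.drop_zero, Jucys.prefixFixSum_zero] at h
  exact congrArg _ h
end

section
/- Let o_{2n} be the orthogonal Lie algebra with standard generators F_{ij} = E_{ij} − E_{ji} (form G = identity), realized inside the affine Lie algebra at the critical level K = −(2n−2). Then in the vacuum module V_{−h∨}(o_{2n}), the noncommutative Pfaffian Pf F[−1] = (1/(2^n n!)) ∑_{σ ∈ S_{2n}} sgn(σ) F_{σ(1)σ(2)}[−1] ⋯ F_{σ(2n−1)σ(2n)}[−1] is annihilated by F_{ij}[0] for all i,j. -/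
/-!
Since `F_{ij}[0]` kills the vacuum, it suffices that it commutes with the Pfaffian. Its
bracket with `F_{ab}[-1]` has no central term, so `ad F_{ij}[0]` acts on `F_{ab}[-1]` through
the action of `E_{ij} - E_{ji}` on the indices, and by the Leibniz rule it acts on the word
`F_{σ(1)σ(2)}[-1] ⋯ F_{σ(2n-1)σ(2n)}[-1]` by replacing one index `σ p = j` by `i`, or `i`
by `j`. The word produced from `σ` then depends only on `update id j i ∘ σ`, which does not
change under `σ ↦ (i j) σ`, while the sign does; so the alternating sum vanishes (`E_{ij}`
acts on the top exterior power by its trace, which is `0` for `i ≠ j`).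
-/

open Function Equiv

theorem lie_list_ofFn_prod {R : Type*} [Ring R] (X : R) :
    ∀ {m : ℕ} (A : Fin m → R),
      ⁅X, (List.ofFn A).prod⁆ = ∑ k, (List.ofFn (update A k ⁅X, A k⁆)).prod
  | 0, A => by simp [Ring.lie_def]
  | m + 1, A => by
    have ih := lie_list_ofFn_prod X (fun k : Fin m => A k.succ)
    have leibniz : ∀ a b : R, ⁅X, a * b⁆ = ⁅X, a⁆ * b + a * ⁅X, b⁆ := fun a b => by
      simp only [Ring.lie_def]; noncomm_ring
    rw [List.ofFn_succ, List.prod_cons, leibniz, ih, Fin.sum_univ_succ, Finset.mul_sum]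
    congr 1
    · simp [List.ofFn_succ]
    · refine Finset.sum_congr rfl fun k _ => ?_
      rw [List.ofFn_succ, List.prod_cons, update_of_ne (Fin.succ_ne_zero k).symm]
      congr 3
      exact (update_comp_eq_of_injective A (Fin.succ_injective m) k _).symm

theorem Equiv.Perm.sum_sign_smul_eq_zero_of_swap_mul {α M : Type*} [Fintype α]
    [DecidableEq α] [AddCommGroup M] (h : Perm α → M) {x y : α} (hxy : x ≠ y)
    (hh : ∀ σ, h (swap x y * σ) = h σ) : ∑ σ, (Perm.sign σ : ℤ) • h σ = 0 :=
  Finset.sum_involution (fun σ _ => swap x y * σ)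
    (fun σ _ => by simp [Perm.sign_swap hxy, hh])
    (fun σ _ _ => (not_congr swap_mul_eq_iff).mpr hxy) (fun σ _ => Finset.mem_univ _)
    fun σ _ => swap_mul_involutive x y σ

theorem Equiv.sum_ite_apply_eq_update {κ ι M : Type*} [Fintype κ] [DecidableEq κ]
    [DecidableEq ι] [AddCommMonoid M] (g : κ ≃ ι) (P : (κ → ι) → M) (x y : ι) :
    ∑ q, (if g q = y then P (update g q x) else 0) = P (update id y x ∘ g) := by
  simp_rw [← g.eq_symm_apply, Finset.sum_ite_eq', Finset.mem_univ, if_true,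
    update_comp_equiv]
  rfl

theorem Function.update_id_comp_swap {α : Type*} [DecidableEq α] (x y : α) :
    update id y x ∘ Equiv.swap x y = update id y x := by
  funext z
  simp only [comp_apply, swap_apply_def, update_apply, id]
  split_ifs <;> simp_all

section PairProd

variable {R ι : Type*} {n : ℕ}

def pairEntries (B : ι → ι → R) (f : Fin n × Fin 2 → ι) (k : Fin n) : R :=
  B (f (k, 0)) (f (k, 1))

def pairProd [Monoid R] (B : ι → ι → R) (f : Fin n × Fin 2 → ι) : R :=
  (List.ofFn (pairEntries B f)).prod

/-- `2 ^ n * n !` times the Pfaffian of `B`, for the pairing of the slots given by `e`. -/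
def pairPfaffian [Fintype ι] [DecidableEq ι] [Ring R] (B : ι → ι → R)
    (e : Fin n × Fin 2 ≃ ι) : R :=
  ∑ σ : Perm ι, (Perm.sign σ : ℤ) • pairProd B (e.trans σ)

theorem pairEntries_update_fst (B : ι → ι → R) (f : Fin n × Fin 2 → ι) (k : Fin n) (x : ι) :
    pairEntries B (update f (k, 0) x) = update (pairEntries B f) k (B x (f (k, 1))) := by
  funext m
  rcases eq_or_ne m k with rfl | hm <;> simp [pairEntries, update, *]

theorem pairEntries_update_snd (B : ι → ι → R) (f : Fin n × Fin 2 → ι) (k : Fin n) (x : ι) :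
    pairEntries B (update f (k, 1) x) = update (pairEntries B f) k (B (f (k, 0)) x) := by
  funext m
  rcases eq_or_ne m k with rfl | hm <;> simp [pairEntries, update, *]

variable [Ring R] [DecidableEq ι]

theorem lie_pairProd (X : R) (B : ι → ι → R) (i j : ι)
    (hX : ∀ a b, ⁅X, B a b⁆ = (if a = j then B i b else 0) - (if a = i then B j b else 0)
      + ((if b = j then B a i else 0) - (if b = i then B a j else 0)))
    (f : Fin n × Fin 2 → ι) :
    ⁅X, pairProd B f⁆ = ∑ q, ((if f q = j then pairProd B (update f q i) else 0)
      - (if f q = i then pairProd B (update f q j) else 0)) := by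
  have hite : ∀ k (c : Prop) [Decidable c] (v : R),
      MultilinearMap.mkPiAlgebraFin ℤ n R (update (pairEntries B f) k (if c then v else 0))
        = if c then MultilinearMap.mkPiAlgebraFin ℤ n R (update (pairEntries B f) k v)
          else 0 := by
    intro k c _ v
    split_ifs <;> simp
  rw [pairProd, lie_list_ofFn_prod, Fintype.sum_prod_type]
  refine Finset.sum_congr rfl fun k _ => ?_
  rw [show ⁅X, pairEntries B f k⁆ = _ from hX _ _]
  simp only [Fin.sum_univ_two, pairProd, ← MultilinearMap.mkPiAlgebraFin_apply (R := ℤ),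
    pairEntries_update_fst, pairEntries_update_snd, MultilinearMap.map_update_add,
    MultilinearMap.map_update_sub, hite]

theorem lie_pairPfaffian_eq_zero [Fintype ι] (X : R) (B : ι → ι → R) (i j : ι)
    (hX : ∀ a b, ⁅X, B a b⁆ = (if a = j then B i b else 0) - (if a = i then B j b else 0)
      + ((if b = j then B a i else 0) - (if b = i then B a j else 0)))
    (e : Fin n × Fin 2 ≃ ι) :
    ⁅X, pairPfaffian B e⁆ = 0 := by
  have hslot : ∀ (σ : Perm ι) (x y : ι), ∑ q, (if (e.trans σ) q = y then
      pairProd B (update (e.trans σ) q x) else 0) = pairProd B (update id y x ∘ e.trans σ) :=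
    fun σ x y => (e.trans σ).sum_ite_apply_eq_update (pairProd B) x y
  have hcancel : ∀ x y : ι, x ≠ y →
      ∑ σ : Perm ι, (Perm.sign σ : ℤ) • pairProd B (update id y x ∘ e.trans σ) = 0 := by
    intro x y hxy
    refine Perm.sum_sign_smul_eq_zero_of_swap_mul _ hxy fun σ => ?_
    rw [Equiv.coe_trans, Equiv.coe_trans, Perm.coe_mul, ← comp_assoc, ← comp_assoc,
      update_id_comp_swap]
    rfl
  let _ : LieRing R := LieRing.ofAssociativeRing
  simp only [pairPfaffian, lie_sum, lie_zsmul, lie_pairProd X B i j hX,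
    Finset.sum_sub_distrib, hslot, smul_sub]
  rcases eq_or_ne i j with rfl | hij
  · exact sub_self _
  · rw [hcancel i j hij, hcancel j i hij.symm, sub_zero]

end PairProd

def finPairEquiv (n : ℕ) : Fin n × Fin 2 ≃ Fin (2 * n) :=
  finProdFinEquiv.trans (finCongr (Nat.mul_comm n 2))

@[simp]
theorem finPairEquiv_apply_val {n : ℕ} (k : Fin n) (t : Fin 2) :
    (finPairEquiv n (k, t) : ℕ) = 2 * k + t := by
  simp only [finPairEquiv, finProdFinEquiv, trans_apply, coe_fn_mk, finCongr_apply, Fin.cast_mk]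
  ring

theorem pairProd_finPairEquiv_trans {R : Type*} [Monoid R] {n : ℕ}
    (B : Fin (2 * n) → Fin (2 * n) → R) (σ : Perm (Fin (2 * n))) :
    pairProd B ((finPairEquiv n).trans σ) = ((List.finRange n).map fun k : Fin n =>
      B (σ ⟨2 * k, by omega⟩) (σ ⟨2 * k + 1, by omega⟩)).prod := by
  rw [pairProd, List.ofFn_eq_map]
  congr 2
  funext k
  simp only [pairEntries, Equiv.coe_trans, comp_apply]
  congr 3 <;> ext <;> simp

/-- In the vacuum module at the critical level `K = -(2n-2)` over the affine
orthogonal Lie algebra `ô_{2n}`, the noncommutative Pfaffian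
`Pf F[-1] = (1/(2^n n!)) ∑_σ sgn(σ) F_{σ(1)σ(2)}[-1] ⋯ F_{σ(2n-1)σ(2n)}[-1]`
applied to the vacuum vector is annihilated by all `F_{ij}[0]`. -/
theorem stmt13 (n : ℕ) (V : Type*) [AddCommGroup V] [Module ℂ V]
    (Fo : Fin (2*n) → Fin (2*n) → ℤ → Module.End ℂ V) (K : ℂ)
    (hcomm : ∀ i j k l : Fin (2*n), ∀ r s : ℤ,
      Fo i j r * Fo k l s - Fo k l s * Fo i j r =
        (if k = j then Fo i l (r+s) else 0) - (if i = l then Fo k j (r+s) else 0)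
        - (if k = i then Fo j l (r+s) else 0) + (if j = l then Fo k i (r+s) else 0)
        + (if r + s = 0 then
            ((r : ℂ) * (((if k = j ∧ i = l then 1 else 0)
              - (if k = i ∧ j = l then (1:ℂ) else 0)) * K)) • 1 else 0))
    (vac : V) (hvac : ∀ i j : Fin (2*n), ∀ r : ℤ, 0 ≤ r → Fo i j r vac = 0)
    (i j : Fin (2*n)) :
    Fo i j 0 (((2^n * n.factorial : ℂ))⁻¹ •
      ∑ σ : Equiv.Perm (Fin (2*n)),
        ((Equiv.Perm.sign σ : ℤ) : ℂ) •
          (((List.finRange n).map fun (k : Fin n) =>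
            Fo (σ ⟨2*(k:ℕ), by have := k.isLt; omega⟩)
               (σ ⟨2*(k:ℕ)+1, by have := k.isLt; omega⟩) (-1)).prod) vac) = 0 := by
  set B := fun a b => Fo a b (-1)
  have hX : ∀ a b, ⁅Fo i j 0, B a b⁆ = (if a = j then B i b else 0)
      - (if a = i then B j b else 0) + ((if b = j then B a i else 0)
      - (if b = i then B a j else 0)) := by
    intro a b
    have h := hcomm i j a b 0 (-1)
    simp only [Int.reduceNeg, zero_add, neg_eq_zero, one_ne_zero, ↓reduceIte, add_zero] at h
    rw [Ring.lie_def, h]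
    simp only [B, eq_comm (a := i), eq_comm (a := j)]
    abel
  have hpf : ∑ σ : Perm (Fin (2 * n)), ((Perm.sign σ : ℤ) : ℂ) •
      ((List.finRange n).map fun k : Fin n =>
        B (σ ⟨2 * k, by omega⟩) (σ ⟨2 * k + 1, by omega⟩)).prod vac
      = pairPfaffian B (finPairEquiv n) vac := by
    simp only [pairPfaffian, LinearMap.sum_apply, LinearMap.smul_apply, Int.cast_smul_eq_zsmul,
      pairProd_finPairEquiv_trans]
  have hcommute := lie_pairPfaffian_eq_zero (Fo i j 0) B i j hX (finPairEquiv n)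
  rw [Ring.lie_def, sub_eq_zero] at hcommute
  rw [hpf, map_smul, ← Module.End.mul_apply, hcommute, Module.End.mul_apply,
    hvac i j 0 le_rfl, map_zero, smul_zero]
end
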